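/- arXiv:math/9810090 — 6 statements merged into one kernel-verified Lean document; each statement's English description precedes it below -/
import Mathlib

section
/- Let 0 < r* < 1, let j ≥ 2 be an integer, and let L(z) = z^j map the open disk Δ(0,r*) into itself. Suppose Δ(0,r*) = A ∪ B where A is open, A and B are disjoint and nonempty, and both A and B are completely invariant under L (i.e., L(A) ⊂ A, L⁻¹(A) ∩ Δ(0,r*) ⊂ A, and similarly for B). Then for every point re^{iθ} ∈ A, the entire circle {z : |z| = r} is contained in A. -/
/-!
An open set containing `z` contains a small arc `z e^{iφ}`, `|φ| < δ`, of the circle through `z`.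
Forward invariance under `z ↦ z ^ j` multiplies the angular width of this arc by `j` at every
step, so after `n` steps, once `j ^ n δ > π`, the whole circle of radius `‖z‖ ^ j ^ n` lies in
`A`. Backward invariance then pulls this circle back, one `j`-th root at a time, to the circle
of radius `‖z‖`; the intermediate circles stay inside the disk because they pass through the
points `z ^ j ^ k ∈ A`.
-/

open Metric Set Complex Real

section PowerMap

variable {S : Set ℂ} {j : ℕ}

lemma exists_arc_subset_of_isOpen (hS : IsOpen S) {z : ℂ} (hz : z ∈ S) :
    ∃ δ > 0, ∀ φ : ℝ, |φ| < δ → z * exp (φ * I) ∈ S := by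
  have hc : Continuous fun φ : ℝ => z * exp (φ * I) := by fun_prop
  obtain ⟨δ, hδ, hball⟩ := Metric.isOpen_iff.mp (hS.preimage hc) 0 (by simpa using hz)
  exact ⟨δ, hδ, fun φ hφ => hball (by simpa [Real.dist_eq] using hφ)⟩

lemma pow_pow_mem_of_image_subset (hfwd : (fun z : ℂ => z ^ j) '' S ⊆ S) {z : ℂ}
    (hz : z ∈ S) (n : ℕ) : z ^ j ^ n ∈ S := by
  simpa [pow_iterate] using (mapsTo_iff_image_subset.2 hfwd).iterate n hz

lemma pow_pow_mul_exp_mem_of_image_subset (hj : 0 < j)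
    (hfwd : (fun z : ℂ => z ^ j) '' S ⊆ S) {z : ℂ} {δ : ℝ}
    (harc : ∀ φ : ℝ, |φ| < δ → z * exp (φ * I) ∈ S) (n : ℕ) :
    ∀ φ : ℝ, |φ| < j ^ n * δ → z ^ j ^ n * exp (φ * I) ∈ S := by
  have hj' : (0 : ℝ) < j := by exact_mod_cast hj
  induction n with
  | zero => simpa using harc
  | succ n ih =>
    intro φ hφ
    have hsmall : |φ / j| < j ^ n * δ := by
      rw [abs_div, abs_of_pos hj', div_lt_iff₀ hj']
      rwa [pow_succ, mul_right_comm] at hφ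
    have hpow : (z ^ j ^ n * exp (↑(φ / j) * I)) ^ j = z ^ j ^ (n + 1) * exp (φ * I) := by
      rw [mul_pow, ← pow_mul, ← pow_succ, ← Complex.exp_nat_mul]
      have hjC : (j : ℂ) ≠ 0 := by exact_mod_cast hj.ne'
      congr 2
      push_cast
      field_simp
    exact hpow ▸ hfwd ⟨_, ih _ hsmall, rfl⟩

lemma sphere_subset_of_arc_subset {w : ℂ} {δ : ℝ} (hδ : π < δ)
    (harc : ∀ φ : ℝ, |φ| < δ → w * exp (φ * I) ∈ S) : sphere 0 ‖w‖ ⊆ S := by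
  intro v hv
  rw [mem_sphere_zero_iff_norm] at hv
  suffices v = w * exp ((v / w).arg * I) from this ▸ harc _ ((abs_arg_le_pi _).trans_lt hδ)
  rcases eq_or_ne w 0 with rfl | hw
  · simpa using hv
  have hunit : ‖v / w‖ = 1 := by rw [norm_div, hv, div_self (norm_ne_zero_iff.2 hw)]
  have hexp := norm_mul_exp_arg_mul_I (v / w)
  rw [hunit, ofReal_one, one_mul] at hexp
  rw [hexp, mul_div_cancel₀ _ hw]

lemma sphere_subset_of_sphere_pow_pow_subset {rs : ℝ}
    (hbwd : (fun z : ℂ => z ^ j) ⁻¹' S ∩ ball 0 rs ⊆ S) (n : ℕ) {r : ℝ}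
    (hr : ∀ k < n, r ^ j ^ k < rs) (h : sphere 0 (r ^ j ^ n) ⊆ S) : sphere 0 r ⊆ S := by
  induction n generalizing r with
  | zero => simpa using h
  | succ n ih =>
    have hroot : sphere 0 (r ^ j) ⊆ S := by
      refine ih (fun k hk => ?_) ?_
      · simpa [← pow_mul, ← pow_succ'] using hr (k + 1) (by omega)
      · simpa [← pow_mul, ← pow_succ'] using h
    intro w hw
    rw [mem_sphere_zero_iff_norm] at hw
    refine hbwd ⟨hroot ?_, ?_⟩
    · simp [hw]
    · simpa [hw] using hr 0 (by omega)

end PowerMap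

theorem stmt0_general (rs : ℝ) (j : ℕ) (hj : 2 ≤ j)
    (A B : Set ℂ) (hAopen : IsOpen A)
    (hunion : Metric.ball (0 : ℂ) rs = A ∪ B)
    (hAfwd : (fun z : ℂ => z ^ j) '' A ⊆ A)
    (hAbwd : (fun z : ℂ => z ^ j) ⁻¹' A ∩ Metric.ball (0 : ℂ) rs ⊆ A) :
    ∀ z ∈ A, ∀ w : ℂ, ‖w‖ = ‖z‖ → w ∈ A := by
  intro z hz w hw
  have hA : A ⊆ ball 0 rs := hunion ▸ subset_union_left
  obtain ⟨δ, hδ, harc⟩ := exists_arc_subset_of_isOpen hAopen hz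
  obtain ⟨n, hn⟩ : ∃ n : ℕ, π / δ < (j : ℝ) ^ n :=
    pow_unbounded_of_one_lt _ (by exact_mod_cast hj)
  have hcircle : sphere 0 (‖z‖ ^ j ^ n) ⊆ A := by
    rw [← norm_pow]
    refine sphere_subset_of_arc_subset ((div_lt_iff₀ hδ).1 hn) ?_
    exact pow_pow_mul_exp_mem_of_image_subset (by omega) hAfwd harc n
  have hinside (k : ℕ) : ‖z‖ ^ j ^ k < rs := by
    rw [← norm_pow, ← mem_ball_zero_iff]
    exact hA (pow_pow_mem_of_image_subset hAfwd hz k)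
  exact sphere_subset_of_sphere_pow_pow_subset hAbwd n (fun k _ => hinside k) hcircle
    (mem_sphere_zero_iff_norm.2 hw)

/-- If `Δ(0,r*) = A ∪ B` with `A` open, `A, B` disjoint nonempty and both completely
invariant under `L z = z ^ j` (`j ≥ 2`), then `A` is a union of circles centered at `0`:
together with any point it contains the whole circle through that point. -/
theorem stmt0 (rs : ℝ) (hrs0 : 0 < rs) (hrs1 : rs < 1) (j : ℕ) (hj : 2 ≤ j)
    (A B : Set ℂ) (hAopen : IsOpen A) (hdisj : Disjoint A B)
    (hAne : A.Nonempty) (hBne : B.Nonempty)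
    (hunion : Metric.ball (0 : ℂ) rs = A ∪ B)
    (hAfwd : (fun z : ℂ => z ^ j) '' A ⊆ A)
    (hAbwd : (fun z : ℂ => z ^ j) ⁻¹' A ∩ Metric.ball (0 : ℂ) rs ⊆ A)
    (hBfwd : (fun z : ℂ => z ^ j) '' B ⊆ B)
    (hBbwd : (fun z : ℂ => z ^ j) ⁻¹' B ∩ Metric.ball (0 : ℂ) rs ⊆ B) :
    ∀ z ∈ A, ∀ w : ℂ, ‖w‖ = ‖z‖ → w ∈ A :=
  stmt0_general rs j hj A B hAopen hunion hAfwd hAbwd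
end

section
/- Let L : Δ(0,r*) → Δ(0,r*) be analytic with L(0) = 0, where 0 < r* < 1, and assume L is not identically zero. Let B ⊂ Δ(0,r*) be a set with empty interior which is a union of circles centered at the origin faithfully containing a sequence of such circles with radii tending to 0 (each radius positive). If L(B) ⊂ B, then L(z) = a z^j for some nonzero complex number a and some positive integer j. -/
open Metric Set Filter Topology

/-!
The moduli of `L` on a circle `C(0, r)` contained in `B` form an interval of radii whose circles
lie in `B`; since `B` has empty interior this interval is a point, so `|L|` is constant on every
circle `C(0, r_n)`. Write `L z = z ^ j g z` with `g 0 ≠ 0`. For small `r_n` the function `g` has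
no zeros on the closed disk and constant modulus on its boundary, so by the maximum and minimum
modulus principles `|g|` attains its maximum at the centre and `g` is constant there. Hence
`L = a z ^ j` near `0`, and on the whole disk by the identity theorem; `j > 0` because `L 0 = 0`.
-/

theorem IsPreconnected.norm_eq_of_mapsTo_of_interior_eq_empty {X E : Type*}
    [TopologicalSpace X] [SeminormedAddCommGroup E] [NormedSpace ℝ E] [NontrivialTopology E]
    {B : Set E} (hB : interior B = ∅) (hBcirc : ∀ z ∈ B, ∀ w : E, ‖w‖ = ‖z‖ → w ∈ B)
    {S : Set X} (hS : IsPreconnected S) {f : X → E} (hf : ContinuousOn f S)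
    (hfS : MapsTo f S B) {x y : X} (hx : x ∈ S) (hy : y ∈ S) : ‖f x‖ = ‖f y‖ := by
  have hradii : IsPreconnected ((‖f ·‖) '' S) :=
    hS.image _ (continuous_norm.comp_continuousOn hf)
  suffices h : ∀ x ∈ S, ∀ y ∈ S, ¬ ‖f x‖ < ‖f y‖ from
    le_antisymm (not_lt.1 (h y hy x hx)) (not_lt.1 (h x hx y hy))
  intro x hx y hy hlt
  have hannulus : norm ⁻¹' Ioo ‖f x‖ ‖f y‖ ⊆ B := by
    intro u hu
    obtain ⟨v, hv, hvu⟩ := hradii.ordConnected.out (mem_image_of_mem _ hx)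
      (mem_image_of_mem _ hy) (Ioo_subset_Icc_self hu)
    exact hBcirc _ (hfS hv) u hvu.symm
  obtain ⟨u, hu⟩ := exists_norm_eq E (c := (‖f x‖ + ‖f y‖) / 2) (by positivity)
  have hu_int : u ∈ interior B := interior_maximal hannulus
    (isOpen_Ioo.preimage continuous_norm) ⟨by linarith, by linarith⟩
  simp [hB] at hu_int

theorem Complex.eqOn_closedBall_of_norm_eqOn_sphere {E : Type*} [NormedAddCommGroup E]
    [NormedSpace ℂ E] [Nontrivial E] {g : E → ℂ} {c : E} {r d : ℝ}
    (hg : DiffContOnCl ℂ g (ball c r)) (hg0 : ∀ z ∈ closedBall c r, g z ≠ 0)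
    (hd : ∀ z ∈ sphere c r, ‖g z‖ = d) : EqOn g (Function.const E (g c)) (closedBall c r) := by
  have hfrontier : ∀ {C : ℝ} {h : E → ℂ}, (∀ z ∈ sphere c r, ‖h z‖ ≤ C) →
      ∀ z ∈ frontier (ball c r), ‖h z‖ ≤ C :=
    fun hC z hz ↦ hC z (frontier_ball_subset_sphere hz)
  have hg0' : ∀ z ∈ closure (ball c r), g z ≠ 0 :=
    fun z hz ↦ hg0 z (closure_ball_subset_closedBall hz)
  refine eqOn_closedBall_of_isMaxOn_norm hg fun z hz ↦ ?_
  have hc : c ∈ closure (ball c r) := subset_closure (mem_ball_self (pos_of_mem_ball hz))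
  have hmax : ‖g z‖ ≤ d := norm_le_of_forall_mem_frontier_norm_le isBounded_ball hg
    (hfrontier fun w hw ↦ (hd w hw).le) (subset_closure hz)
  have hmin : d ≤ ‖g c‖ := by
    rcases le_or_gt d 0 with hd0 | hd0
    · exact hd0.trans (norm_nonneg _)
    have hinv : ‖(g c)⁻¹‖ ≤ d⁻¹ := norm_le_of_forall_mem_frontier_norm_le isBounded_ball
      (hg.inv hg0') (hfrontier fun w hw ↦ by rw [Pi.inv_apply, norm_inv, hd w hw]) hc
    rwa [norm_inv, inv_le_inv₀ (norm_pos_iff.2 (hg0' c hc)) hd0] at hinv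
  exact hmax.trans hmin

theorem AnalyticAt.exists_eventuallyEq_mul_pow_of_frequently_norm_const_on_sphere
    {f : ℂ → ℂ} {z₀ : ℂ} (hf : AnalyticAt ℂ f z₀) (hord : analyticOrderAt f z₀ ≠ ⊤)
    (hsph : ∃ᶠ r in 𝓝[>] 0, ∃ d, ∀ z ∈ sphere z₀ r, ‖f z‖ = d) :
    ∃ a ≠ 0, f =ᶠ[𝓝 z₀] fun z ↦ a * (z - z₀) ^ analyticOrderNatAt f z₀ := by
  obtain ⟨g, hg, hg0, hfg⟩ := hf.analyticOrderAt_ne_top.1 hord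
  set j := analyticOrderNatAt f z₀
  obtain ⟨δ, hδ, hnice⟩ := eventually_nhds_iff_ball.1
    ((hfg.and hg.eventually_analyticAt).and (hg.continuousAt.eventually_ne hg0))
  beta_reduce at hnice
  obtain ⟨r, ⟨d, hd⟩, hr, hrδ⟩ := (hsph.and_eventually (Ioo_mem_nhdsGT hδ)).exists
  have hclosedBall : closedBall z₀ r ⊆ ball z₀ δ := closedBall_subset_ball hrδ
  have hgdiff : DifferentiableOn ℂ g (closure (ball z₀ r)) := fun z hz ↦
    (hnice z (hclosedBall (closure_ball_subset_closedBall hz))).1.2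
      |>.differentiableAt.differentiableWithinAt
  have hgsph : ∀ z ∈ sphere z₀ r, ‖g z‖ = d / r ^ j := by
    intro z hz
    have hz' : ‖z - z₀‖ = r := mem_sphere_iff_norm.1 hz
    rw [eq_div_iff (pow_ne_zero _ hr.ne'), ← hd z hz,
      (hnice z (hclosedBall (sphere_subset_closedBall hz))).1.1, smul_eq_mul, norm_mul,
      norm_pow, hz', mul_comm]
  have hgconst := Complex.eqOn_closedBall_of_norm_eqOn_sphere hgdiff.diffContOnCl
    (fun z hz ↦ (hnice z (hclosedBall hz)).2) hgsph
  refine ⟨g z₀, hg0, ?_⟩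
  filter_upwards [ball_mem_nhds z₀ hr] with z hz
  rw [(hnice z (hclosedBall (ball_subset_closedBall hz))).1.1,
    hgconst (ball_subset_closedBall hz), smul_eq_mul, Function.const_apply, mul_comm]

theorem stmt2_general (rs : ℝ) (hrs0 : 0 < rs) (L : ℂ → ℂ)
    (hLan : AnalyticOnNhd ℂ L (Metric.ball (0 : ℂ) rs))
    (hL0 : L 0 = 0)
    (hLnz : ∃ z ∈ Metric.ball (0 : ℂ) rs, L z ≠ 0)
    (B : Set ℂ) (hBsub : B ⊆ Metric.ball (0 : ℂ) rs)
    (hBint : interior B = ∅)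
    (hBcirc : ∀ z ∈ B, ∀ w : ℂ, ‖w‖ = ‖z‖ → w ∈ B)
    (rseq : ℕ → ℝ) (hrpos : ∀ n, 0 < rseq n)
    (hrtend : Tendsto rseq atTop (nhds 0))
    (hrB : ∀ n, {z : ℂ | ‖z‖ = rseq n} ⊆ B)
    (hfwd : L '' B ⊆ B) :
    ∃ a : ℂ, a ≠ 0 ∧ ∃ j : ℕ, 0 < j ∧ ∀ z ∈ Metric.ball (0 : ℂ) rs, L z = a * z ^ j := by
  have h0 : (0 : ℂ) ∈ ball (0 : ℂ) rs := mem_ball_self hrs0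
  have hball : IsPreconnected (ball (0 : ℂ) rs) := (convex_ball _ _).isPreconnected
  have hord : analyticOrderAt L 0 ≠ ⊤ := by
    obtain ⟨z, hz, hLz⟩ := hLnz
    rw [Ne, analyticOrderAt_eq_top]
    exact fun h ↦ hLz (hLan.eqOn_zero_of_preconnected_of_eventuallyEq_zero hball h0 h hz)
  have hsph : ∀ n, ∃ d, ∀ z ∈ sphere (0 : ℂ) (rseq n), ‖L z‖ = d := by
    intro n
    have hS : sphere (0 : ℂ) (rseq n) ⊆ B := fun z hz ↦ hrB n (mem_sphere_zero_iff_norm.1 hz)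
    have hLS : MapsTo L (sphere 0 (rseq n)) B := fun w hw ↦ hfwd (mem_image_of_mem L (hS hw))
    refine ⟨‖L (rseq n)‖, fun z hz ↦ ?_⟩
    exact (isPreconnected_sphere (by simp) 0 _).norm_eq_of_mapsTo_of_interior_eq_empty hBint
      hBcirc (hLan.continuousOn.mono (hS.trans hBsub)) hLS hz (by simp [(hrpos n).le])
  have hfreq : ∃ᶠ r in 𝓝[>] (0 : ℝ), ∃ d, ∀ z ∈ sphere (0 : ℂ) r, ‖L z‖ = d :=
    (tendsto_nhdsWithin_iff.2 ⟨hrtend, .of_forall hrpos⟩).frequently (.of_forall hsph)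
  obtain ⟨a, ha, hLa⟩ :=
    (hLan 0 h0).exists_eventuallyEq_mul_pow_of_frequently_norm_const_on_sphere hord hfreq
  have hEq : EqOn L (fun z ↦ a * (z - 0) ^ analyticOrderNatAt L 0) (ball 0 rs) :=
    hLan.eqOn_of_preconnected_of_eventuallyEq (fun z _ ↦ by fun_prop) hball h0 hLa
  refine ⟨a, ha, analyticOrderNatAt L 0, Nat.pos_of_ne_zero fun hj ↦ ha ?_,
    fun z hz ↦ by simpa using hEq hz⟩
  simpa [hL0, hj, eq_comm] using hEq h0

/-- If `L` is analytic on `Δ(0,r*)`, maps it into itself, fixes `0`, is not identically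
zero, and leaves forward invariant a set `B` with empty interior which is a union of circles
centered at the origin containing a sequence of circles with radii tending to `0`, then
`L z = a * z ^ j` on the disk for some `a ≠ 0` and `j ≥ 1`. -/
theorem stmt2 (rs : ℝ) (hrs0 : 0 < rs) (hrs1 : rs < 1) (L : ℂ → ℂ)
    (hLan : AnalyticOnNhd ℂ L (Metric.ball (0 : ℂ) rs))
    (hLmaps : Set.MapsTo L (Metric.ball (0 : ℂ) rs) (Metric.ball (0 : ℂ) rs))
    (hL0 : L 0 = 0)
    (hLnz : ∃ z ∈ Metric.ball (0 : ℂ) rs, L z ≠ 0)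
    (B : Set ℂ) (hBsub : B ⊆ Metric.ball (0 : ℂ) rs)
    (hBint : interior B = ∅)
    (hBcirc : ∀ z ∈ B, ∀ w : ℂ, ‖w‖ = ‖z‖ → w ∈ B)
    (rseq : ℕ → ℝ) (hrpos : ∀ n, 0 < rseq n)
    (hrtend : Tendsto rseq atTop (nhds 0))
    (hrB : ∀ n, {z : ℂ | ‖z‖ = rseq n} ⊆ B)
    (hfwd : L '' B ⊆ B) :
    ∃ a : ℂ, a ≠ 0 ∧ ∃ j : ℕ, 0 < j ∧ ∀ z ∈ Metric.ball (0 : ℂ) rs, L z = a * z ^ j :=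
  stmt2_general rs hrs0 L hLan hL0 hLnz B hBsub hBint hBcirc rseq hrpos hrtend hrB hfwd
end

section
/- Let L : Δ(0,r*) → ℂ be analytic (0 < r* < 1) with L not identically zero and L(0) = 0, so that L(z) = a z^j (1 + higher order terms) with a ≠ 0. Suppose there is a sequence of radii r_n → 0, r_n > 0, such that each image L(C(0,r_n)) of the circle C(0,r_n) is contained in some circle centered at the origin. If the function h(z) = L(z)/(a z^j) (extended by h(0) = 1) is analytic on Δ(0,r*), then h ≡ 1, i.e., L(z) = a z^j. -/
/-!
On a small circle `C(0, r)` on which `h` does not vanish, `‖L‖` constant forces `‖h‖` constant,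
say equal to `c`. The maximum modulus principle applied to `h` and to `1 / h` gives
`‖h 0‖ ≤ c ≤ ‖h 0‖`, so `‖h‖` attains its maximum on the disc at the centre and `h` is constant
there; the identity theorem propagates `h = h 0 = 1` to all of `Δ(0, r*)`.
-/

open Metric Set Filter

theorem Complex.norm_le_of_forall_mem_sphere_norm_le {E : Type*} [NormedAddCommGroup E]
    [NormedSpace ℂ E] [Nontrivial E] {f : E → ℂ} {z₀ : E} {r C : ℝ} (hr : r ≠ 0)
    (hf : DiffContOnCl ℂ f (ball z₀ r)) (hC : ∀ z ∈ sphere z₀ r, ‖f z‖ ≤ C) :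
    ∀ z ∈ closedBall z₀ r, ‖f z‖ ≤ C := by
  intro z hz
  refine norm_le_of_forall_mem_frontier_norm_le isBounded_ball hf (fun w hw => hC w ?_) ?_
  · rwa [frontier_ball z₀ hr] at hw
  · rwa [closure_ball z₀ hr]

theorem Complex.eqOn_closedBall_of_forall_mem_sphere_norm_eq {E : Type*} [NormedAddCommGroup E]
    [NormedSpace ℂ E] [Nontrivial E] {f : E → ℂ} {z₀ : E} {r c : ℝ} (hr : 0 < r)
    (hf : DiffContOnCl ℂ f (ball z₀ r)) (hne : ∀ z ∈ closedBall z₀ r, f z ≠ 0)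
    (hc : ∀ z ∈ sphere z₀ r, ‖f z‖ = c) :
    EqOn f (Function.const E (f z₀)) (closedBall z₀ r) := by
  have hcentre : z₀ ∈ closedBall z₀ r := mem_closedBall_self hr.le
  have hle : ∀ z ∈ closedBall z₀ r, ‖f z‖ ≤ c :=
    norm_le_of_forall_mem_sphere_norm_le hr.ne' hf fun z hz => (hc z hz).le
  obtain ⟨w, hw⟩ := (NormedSpace.sphere_nonempty (x := z₀)).2 hr.le
  have hc_pos : 0 < c := hc w hw ▸ norm_pos_iff.2 (hne w (sphere_subset_closedBall hw))
  have hinv_le : ‖f z₀‖⁻¹ ≤ c⁻¹ := by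
    have hf_inv : DiffContOnCl ℂ f⁻¹ (ball z₀ r) :=
      hf.inv fun z hz => hne z (by rwa [closure_ball z₀ hr.ne'] at hz)
    simpa using norm_le_of_forall_mem_sphere_norm_le hr.ne' hf_inv
      (fun z hz => by simp [hc z hz]) z₀ hcentre
  have hge : c ≤ ‖f z₀‖ :=
    (inv_le_inv₀ (norm_pos_iff.2 (hne z₀ hcentre)) hc_pos).1 hinv_le
  exact eqOn_closedBall_of_isMaxOn_norm hf fun z hz =>
    (hle z (ball_subset_closedBall hz)).trans hge

theorem stmt3_general (rs : ℝ) (hrs0 : 0 < rs) (L : ℂ → ℂ)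
    (a : ℂ) (ha : a ≠ 0) (j : ℕ)
    (h : ℂ → ℂ) (hhan : AnalyticOnNhd ℂ h (Metric.ball (0 : ℂ) rs))
    (hh0 : h 0 = 1)
    (hfac : ∀ z ∈ Metric.ball (0 : ℂ) rs, L z = a * z ^ j * h z)
    (rseq : ℕ → ℝ) (hrpos : ∀ n, 0 < rseq n) (hrlt : ∀ n, rseq n < rs)
    (hrtend : Tendsto rseq atTop (nhds 0))
    (hcirc : ∀ n, ∃ ρ : ℝ, L '' {z : ℂ | ‖z‖ = rseq n} ⊆
        {w : ℂ | ‖w‖ = ρ}) :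
    (∀ z ∈ Metric.ball (0 : ℂ) rs, h z = 1) ∧
      ∀ z ∈ Metric.ball (0 : ℂ) rs, L z = a * z ^ j := by
  have h0mem : (0 : ℂ) ∈ ball (0 : ℂ) rs := mem_ball_self hrs0
  obtain ⟨ε, hε, hne⟩ := eventually_nhds_iff_ball.1 <|
    (hhan 0 h0mem).continuousAt.eventually_ne (hh0 ▸ one_ne_zero)
  obtain ⟨n, hn⟩ := (hrtend.eventually (gt_mem_nhds hε)).exists
  set r := rseq n
  have hr : 0 < r := hrpos n
  have hsub : closedBall (0 : ℂ) r ⊆ ball 0 rs := closedBall_subset_ball (hrlt n)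
  obtain ⟨ρ, hρ⟩ := hcirc n
  have hsphere : ∀ z ∈ sphere (0 : ℂ) r, ‖h z‖ = ρ / (‖a‖ * r ^ j) := by
    intro z hz
    have hz' : ‖z‖ = r := mem_sphere_zero_iff_norm.1 hz
    have hLz : ‖L z‖ = ρ := hρ ⟨z, hz', rfl⟩
    rw [hfac z (hsub (sphere_subset_closedBall hz)), norm_mul, norm_mul, norm_pow, hz'] at hLz
    rw [eq_div_iff (mul_ne_zero (norm_ne_zero_iff.2 ha) (pow_ne_zero _ hr.ne')), ← hLz]
    ring
  have hdiff : DiffContOnCl ℂ h (ball 0 r) :=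
    (hhan.differentiableOn.mono (by rwa [closure_ball _ hr.ne'])).diffContOnCl
  have hlocal : EqOn h (fun _ => 1) (closedBall 0 r) :=
    hh0 ▸ Complex.eqOn_closedBall_of_forall_mem_sphere_norm_eq hr hdiff
      (fun z hz => hne z (closedBall_subset_ball hn hz)) hsphere
  have hglobal : EqOn h (fun _ => 1) (ball 0 rs) :=
    hhan.eqOn_of_preconnected_of_eventuallyEq analyticOnNhd_const
      (convex_ball 0 rs).isPreconnected h0mem (eventually_of_mem (closedBall_mem_nhds 0 hr) hlocal)
  exact ⟨hglobal, fun z hz => by rw [hfac z hz, hglobal hz, mul_one]⟩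

/-- If `L = a z^j (1 + h.o.t.)` is analytic on `Δ(0,r*)` with `a ≠ 0`, and there is a
sequence of circles `C(0, r_n)`, `r_n → 0`, each of whose images under `L` lies in a circle
centered at the origin, then the analytic factor `h z = L z / (a z^j)` (with `h 0 = 1`)
is identically `1`, i.e. `L z = a z ^ j`. -/
theorem stmt3 (rs : ℝ) (hrs0 : 0 < rs) (hrs1 : rs < 1) (L : ℂ → ℂ)
    (hLan : AnalyticOnNhd ℂ L (Metric.ball (0 : ℂ) rs))
    (hL0 : L 0 = 0)
    (a : ℂ) (ha : a ≠ 0) (j : ℕ) (hj : 0 < j)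
    (h : ℂ → ℂ) (hhan : AnalyticOnNhd ℂ h (Metric.ball (0 : ℂ) rs))
    (hh0 : h 0 = 1)
    (hfac : ∀ z ∈ Metric.ball (0 : ℂ) rs, L z = a * z ^ j * h z)
    (rseq : ℕ → ℝ) (hrpos : ∀ n, 0 < rseq n) (hrlt : ∀ n, rseq n < rs)
    (hrtend : Tendsto rseq atTop (nhds 0))
    (hcirc : ∀ n, ∃ ρ : ℝ, L '' {z : ℂ | ‖z‖ = rseq n} ⊆
        {w : ℂ | ‖w‖ = ρ}) :
    (∀ z ∈ Metric.ball (0 : ℂ) rs, h z = 1) ∧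
      ∀ z ∈ Metric.ball (0 : ℂ) rs, L z = a * z ^ j :=
  stmt3_general rs hrs0 L a ha j h hhan hh0 hfac rseq hrpos hrlt hrtend hcirc
end

section
/- Let j, m ≥ 2 be integers, c < 0 a real number, and define t(r) = j·r and s(r) = m·r + c on I = [-∞, log r*) where log r* < 0. Let B' ⊂ I be nonempty, relatively closed in I, containing -∞, containing a sequence of points tending to -∞, and satisfying s(B') ⊂ B', t(B') ⊂ B', s⁻¹(B') ∩ I ⊂ B', t⁻¹(B') ∩ I ⊂ B'. Then B' = I. -/
/-!
Far to the left of the interval, the composite `t^-(k+1) ∘ s ∘ t ∘ s⁻¹ ∘ t^k` is the translation by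
`(1 - j) c / j^(k+1)`, a positive length tending to `0`. Starting from points of `B` arbitrarily far
to the left, these translations make `B` dense, hence (being relatively closed) equal to the
interval, on some half-line `(-∞, X)`. Every point of the interval is sent into this half-line by
a power of `t`, and backward invariance under `t` brings it back into `B`.
-/

open Set Filter Topology

theorem exists_mem_Ioc_of_forall_add_mem {B : Set ℝ} {a x e : ℝ} (he : 0 < e) (ha : a ∈ B)
    (hax : a ≤ x) (hstep : ∀ y ∈ B, y ≤ x → y + e ∈ B) : ∃ y ∈ B, y ∈ Ioc (x - e) x := by
  have hsteps : ∀ N : ℕ, a + N * e ≤ x → a + N * e ∈ B := by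
    intro N
    induction N with
    | zero => simpa using fun _ => ha
    | succ N ih =>
      intro hN
      have hN' : a + N * e ≤ x := by push_cast at hN; linarith
      simpa [add_mul, add_assoc] using hstep _ (ih hN') hN'
  set N := ⌊(x - a) / e⌋₊
  have hN_le : (N : ℝ) * e ≤ x - a := (le_div_iff₀ he).mp (Nat.floor_le (by positivity))
  have hlt_N : x - a < (N + 1) * e := (div_lt_iff₀ he).mp (Nat.lt_floor_add_one _)
  exact ⟨a + N * e, hsteps N (by linarith), by constructor <;> linarith⟩

theorem Iio_subset_closure_of_forall_add_mem {B : Set ℝ} {X : ℝ} (hB : ¬BddBelow B)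
    (hstep : ∀ ε > 0, ∃ e ∈ Ioo 0 ε, ∀ y ∈ B, y < X → y + e ∈ B) : Iio X ⊆ closure B := by
  intro x hx
  rw [Real.mem_closure_iff]
  intro ε hε
  obtain ⟨e, ⟨he, heε⟩, hadd⟩ := hstep ε hε
  obtain ⟨a, ha, hax⟩ := not_bddBelow_iff.mp hB x
  obtain ⟨y, hy, hyx⟩ := exists_mem_Ioc_of_forall_add_mem he ha hax.le
    fun y hy hyx => hadd y hy (hyx.trans_lt hx)
  exact ⟨y, hy, by rw [abs_sub_lt_iff]; constructor <;> linarith [hyx.1, hyx.2]⟩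

section Dynamics

variable {B : Set ℝ} {L j m c : ℝ}

theorem mem_of_pow_mul_mem (hj : 1 ≤ j) (hL : L ≤ 0)
    (htbwd : ∀ x < L, j * x ∈ B → x ∈ B) (k : ℕ) {x : ℝ} (hx : x < L) (h : j ^ k * x ∈ B) :
    x ∈ B := by
  induction k generalizing x with
  | zero => simpa using h
  | succ k ih =>
    have hjx : j * x < L := (mul_le_of_one_le_left (hx.le.trans hL) hj).trans_lt hx
    exact htbwd x hx (ih hjx (by rwa [pow_succ, mul_assoc] at h))

theorem mul_add_mem (hm : 0 < m) (htfwd : MapsTo (j * ·) B B) (hsfwd : MapsTo (m * · + c) B B)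
    (hsbwd : ∀ x < L, m * x + c ∈ B → x ∈ B) {y : ℝ} (hy : y ∈ B) (hyL : y < m * L + c) :
    j * y + (1 - j) * c ∈ B := by
  have hz : (y - c) / m ∈ B := by
    refine hsbwd _ ((div_lt_iff₀ hm).mpr (by linarith)) ?_
    rwa [mul_div_cancel₀ _ hm.ne', sub_add_cancel]
  convert hsfwd (htfwd hz) using 1
  field_simp
  ring

theorem add_div_pow_mem (hj : 1 ≤ j) (hL : L ≤ 0) (hm : 0 < m) (hc : c ≤ 0)
    (htfwd : MapsTo (j * ·) B B) (hsfwd : MapsTo (m * · + c) B B)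
    (htbwd : ∀ x < L, j * x ∈ B → x ∈ B) (hsbwd : ∀ x < L, m * x + c ∈ B → x ∈ B)
    (k : ℕ) {x : ℝ} (hx : x ∈ B) (hxX : x < m * L + c) (hxL : x + (1 - j) * c / j ^ (k + 1) < L) :
    x + (1 - j) * c / j ^ (k + 1) ∈ B := by
  have hpow : j ^ k * x ∈ B := by simpa [mul_left_iterate] using htfwd.iterate k hx
  have hx0 : x ≤ 0 := by linarith [mul_nonpos_of_nonneg_of_nonpos hm.le hL]
  have hpow_le : j ^ k * x ≤ x := mul_le_of_one_le_left hx0 (one_le_pow₀ hj)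
  refine mem_of_pow_mul_mem hj hL htbwd (k + 1) hxL ?_
  convert mul_add_mem hm htfwd hsfwd hsbwd hpow (hpow_le.trans_lt hxX) using 1
  field_simp
  ring

theorem Iio_subset_of_Iio_subset (hj : 1 < j) (hL : L ≤ 0)
    (htbwd : ∀ x < L, j * x ∈ B → x ∈ B) {X : ℝ} (hX : Iio X ⊆ B) : Iio L ⊆ B := by
  intro x hx
  have hx0 : x < 0 := lt_of_lt_of_le hx hL
  obtain ⟨k, hk⟩ := pow_unbounded_of_one_lt (X / x) hj
  exact mem_of_pow_mul_mem hj.le hL htbwd k hx (hX ((div_lt_iff_of_neg hx0).mp hk))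

theorem eq_Iio_of_invariant (hj : 1 < j) (hL : L ≤ 0) (hm : 0 < m) (hc : c < 0)
    (hsub : B ⊆ Iio L) (hclosed : closure B ∩ Iio L ⊆ B) (hB : ¬BddBelow B)
    (htfwd : MapsTo (j * ·) B B) (hsfwd : MapsTo (m * · + c) B B)
    (htbwd : ∀ x < L, j * x ∈ B → x ∈ B) (hsbwd : ∀ x < L, m * x + c ∈ B → x ∈ B) :
    B = Iio L := by
  set d := (1 - j) * c
  have hd : 0 < d := mul_pos_of_neg_of_neg (by linarith) hc
  set X := min (m * L + c) (L - d)
  have hstep : ∀ ε > 0, ∃ e ∈ Ioo 0 ε, ∀ y ∈ B, y < X → y + e ∈ B := by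
    intro ε hε
    have hlim : Tendsto (fun k : ℕ => d / j ^ (k + 1)) atTop (𝓝 0) :=
      tendsto_const_nhds.div_atTop
        ((tendsto_pow_atTop_atTop_of_one_lt hj).comp (tendsto_add_atTop_nat 1))
    obtain ⟨k, hk⟩ := (hlim.eventually (gt_mem_nhds hε)).exists
    have hle_d : d / j ^ (k + 1) ≤ d := div_le_self hd.le (one_le_pow₀ hj.le)
    refine ⟨d / j ^ (k + 1), ⟨by positivity, hk⟩, fun y hy hyX => ?_⟩
    have hyX' : y < L - d := hyX.trans_le (min_le_right _ _)
    exact add_div_pow_mem hj.le hL hm hc.le htfwd hsfwd htbwd hsbwd k hy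
      (hyX.trans_le (min_le_left _ _)) (by linarith)
  have hXL : X ≤ L := (min_le_right _ _).trans (by linarith)
  have hdense : Iio X ⊆ B := fun x hx =>
    hclosed ⟨Iio_subset_closure_of_forall_add_mem hB hstep hx, hx.trans_le hXL⟩
  exact hsub.antisymm (Iio_subset_of_Iio_subset hj hL htbwd hdense)

end Dynamics

theorem stmt4_general (rs : ℝ) (hrs0 : 0 < rs) (hrs1 : rs < 1)
    (j m : ℕ) (hj : 2 ≤ j) (hm : 2 ≤ m) (c : ℝ) (hc : c < 0)
    (B' : Set ℝ) (hsub : B' ⊆ Set.Iio (Real.log rs))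
    (hclosed : closure B' ∩ Set.Iio (Real.log rs) ⊆ B')
    (hseq : ∃ u : ℕ → ℝ, (∀ n, u n ∈ B') ∧ Tendsto u atTop atBot)
    (hsfwd : (fun r : ℝ => (m : ℝ) * r + c) '' B' ⊆ B')
    (htfwd : (fun r : ℝ => (j : ℝ) * r) '' B' ⊆ B')
    (hsbwd : (fun r : ℝ => (m : ℝ) * r + c) ⁻¹' B' ∩ Set.Iio (Real.log rs) ⊆ B')
    (htbwd : (fun r : ℝ => (j : ℝ) * r) ⁻¹' B' ∩ Set.Iio (Real.log rs) ⊆ B') :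
    B' = Set.Iio (Real.log rs) := by
  obtain ⟨u, hu, hu_lim⟩ := hseq
  have hB : ¬BddBelow B' := fun hbdd =>
    not_bddBelow_of_tendsto_atBot hu_lim (hbdd.mono (range_subset_iff.mpr hu))
  have hj' : (1 : ℝ) < j := by exact_mod_cast hj
  have hm' : (0 : ℝ) < m := Nat.cast_pos.mpr (by omega)
  exact eq_Iio_of_invariant hj' (Real.log_neg hrs0 hrs1).le hm' hc hsub hclosed hB
    (mapsTo_iff_image_subset.mpr htfwd) (mapsTo_iff_image_subset.mpr hsfwd)
    (fun x hx h => htbwd ⟨h, hx⟩) (fun x hx h => hsbwd ⟨h, hx⟩)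

/-- Real-line version of the key combinatorial lemma: if `B' ⊆ (-∞, log r*)` is
relatively closed, contains a sequence tending to `-∞`, and is invariant (forward, and
backward within the interval) under `t r = j r` and `s r = m r + c` (`j, m ≥ 2`, `c < 0`),
then `B'` is the whole interval `(-∞, log r*)`. -/
theorem stmt4 (rs : ℝ) (hrs0 : 0 < rs) (hrs1 : rs < 1)
    (j m : ℕ) (hj : 2 ≤ j) (hm : 2 ≤ m) (c : ℝ) (hc : c < 0)
    (B' : Set ℝ) (hsub : B' ⊆ Set.Iio (Real.log rs)) (hne : B'.Nonempty)
    (hclosed : closure B' ∩ Set.Iio (Real.log rs) ⊆ B')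
    (hseq : ∃ u : ℕ → ℝ, (∀ n, u n ∈ B') ∧ Tendsto u atTop atBot)
    (hsfwd : (fun r : ℝ => (m : ℝ) * r + c) '' B' ⊆ B')
    (htfwd : (fun r : ℝ => (j : ℝ) * r) '' B' ⊆ B')
    (hsbwd : (fun r : ℝ => (m : ℝ) * r + c) ⁻¹' B' ∩ Set.Iio (Real.log rs) ⊆ B')
    (htbwd : (fun r : ℝ => (j : ℝ) * r) ⁻¹' B' ∩ Set.Iio (Real.log rs) ⊆ B') :
    B' = Set.Iio (Real.log rs) :=
  stmt4_general rs hrs0 hrs1 j m hj hm c hc B' hsub hclosed hseq hsfwd htfwd hsbwd htbwd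
end

section
/- Define t(r) = j·r and s(r) = r₀ + m·(r - r₀) for integers j, m ≥ 2 and real r₀ > 0. Then for every real r and every positive integer n, (t⁻ⁿ ∘ s⁻ⁿ ∘ tⁿ ∘ sⁿ)(r) = r - r₀ + dₙ, where dₙ = r₀ (mⁿ + jⁿ - 1)/(mⁿ jⁿ); moreover 0 < dₙ ≤ r₀ and dₙ → 0 as n → ∞. -/
/-!
The four maps are affine, and iterating `s` (resp. `s⁻¹`) scales the offset from its fixed point
`r₀` by `mⁿ` (resp. `m⁻ⁿ`), while `tⁿ` and `t⁻ⁿ` scale by `j^{±n}`. Composing these closed forms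
gives `r - r₀ + dₙ` with `dₙ = r₀ (1/jⁿ + 1/mⁿ - 1/(mⁿ jⁿ))`, and since
`mⁿ + jⁿ - 1 ≤ mⁿ jⁿ` is `(mⁿ - 1)(jⁿ - 1) ≥ 0`, we get `0 < dₙ ≤ r₀` and `dₙ → 0`.
-/

open Filter Topology

section Iterate

lemma iterate_affine_mul {R : Type*} [Ring R] (r0 c : R) (n : ℕ) (r : R) :
    (fun r : R => r0 + c * (r - r0))^[n] r = r0 + c ^ n * (r - r0) := by
  induction n generalizing r with
  | zero => simp
  | succ n ih => rw [Function.iterate_succ_apply', ih, add_sub_cancel_left, pow_succ', mul_assoc]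

variable {K : Type*} [Field K]

lemma iterate_div_const (c : K) (n : ℕ) (r : K) :
    (fun r : K => r / c)^[n] r = r / c ^ n := by
  induction n generalizing r with
  | zero => simp
  | succ n ih => rw [Function.iterate_succ_apply, ih, div_div, ← pow_succ']

lemma iterate_affine_div (r0 c : K) (n : ℕ) (r : K) :
    (fun r : K => r0 + (r - r0) / c)^[n] r = r0 + (r - r0) / c ^ n := by
  induction n generalizing r with
  | zero => simp
  | succ n ih => rw [Function.iterate_succ_apply', ih, add_sub_cancel_left, div_div, ← pow_succ]

lemma iterate_commutator_eq {a b : K} (ha : a ≠ 0) (hb : b ≠ 0)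
    (r0 r : K) (n : ℕ) :
    (fun r : K => r / b)^[n]
        ((fun r : K => r0 + (r - r0) / a)^[n]
          ((fun r : K => b * r)^[n] ((fun r : K => r0 + a * (r - r0))^[n] r)))
      = r - r0 + r0 * (a ^ n + b ^ n - 1) / (a ^ n * b ^ n) := by
  rw [iterate_affine_mul, mul_left_iterate_apply, iterate_affine_div, iterate_div_const]
  have han : a ^ n ≠ 0 := pow_ne_zero n ha
  have hbn : b ^ n ≠ 0 := pow_ne_zero n hb
  field_simp
  ring

end Iterate

section Bounds

variable {K : Type*} [Field K] [LinearOrder K] [IsStrictOrderedRing K]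

lemma add_sub_one_le_mul {x y : K} (hx : 1 ≤ x) (hy : 1 ≤ y) : x + y - 1 ≤ x * y := by
  nlinarith [mul_nonneg (sub_nonneg.2 hx) (sub_nonneg.2 hy)]

lemma mul_add_sub_one_div_mul_mem_Ioc {r0 x y : K} (hr0 : 0 < r0) (hx : 1 ≤ x) (hy : 1 ≤ y) :
    r0 * (x + y - 1) / (x * y) ∈ Set.Ioc 0 r0 := by
  have hxy : 0 < x * y := mul_pos (by linarith) (by linarith)
  have hnum : 0 < x + y - 1 := by linarith
  refine ⟨by positivity, ?_⟩
  rw [div_le_iff₀ hxy]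
  exact mul_le_mul_of_nonneg_left (add_sub_one_le_mul hx hy) hr0.le

end Bounds

lemma tendsto_mul_pow_add_pow_sub_one_div (r0 : ℝ) {a b : ℝ} (ha : 1 < a) (hb : 1 < b) :
    Tendsto (fun n : ℕ => r0 * (a ^ n + b ^ n - 1) / (a ^ n * b ^ n)) atTop (𝓝 0) := by
  have hA := (tendsto_pow_atTop_atTop_of_one_lt ha).inv_tendsto_atTop
  have hB := (tendsto_pow_atTop_atTop_of_one_lt hb).inv_tendsto_atTop
  have hlim := ((hA.add hB).sub (hA.mul hB)).const_mul r0
  simp only [add_zero, mul_zero, sub_zero] at hlim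
  refine hlim.congr fun n => ?_
  have han : a ^ n ≠ 0 := pow_ne_zero n (by linarith)
  have hbn : b ^ n ≠ 0 := pow_ne_zero n (by linarith)
  simp only [Pi.inv_apply]
  field_simp
  ring

/-- For `t r = j r`, `s r = r₀ + m (r - r₀)` with inverses `t⁻¹ r = r / j`,
`s⁻¹ r = r₀ + (r - r₀)/m`, one has `(t⁻ⁿ ∘ s⁻ⁿ ∘ tⁿ ∘ sⁿ)(r) = r - r₀ + dₙ` where
`dₙ = r₀ (mⁿ + jⁿ - 1)/(mⁿ jⁿ)`; moreover `0 < dₙ ≤ r₀` and `dₙ → 0`. -/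
theorem stmt6 (j m : ℕ) (hj : 2 ≤ j) (hm : 2 ≤ m) (r0 : ℝ) (hr0 : 0 < r0) :
    (∀ (r : ℝ) (n : ℕ),
      (fun r : ℝ => r / (j : ℝ))^[n]
        ((fun r : ℝ => r0 + (r - r0) / (m : ℝ))^[n]
          ((fun r : ℝ => (j : ℝ) * r)^[n]
            ((fun r : ℝ => r0 + (m : ℝ) * (r - r0))^[n] r)))
        = r - r0 + r0 * ((m : ℝ) ^ n + (j : ℝ) ^ n - 1) / ((m : ℝ) ^ n * (j : ℝ) ^ n)) ∧
    (∀ n : ℕ, 0 < r0 * ((m : ℝ) ^ n + (j : ℝ) ^ n - 1) / ((m : ℝ) ^ n * (j : ℝ) ^ n) ∧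
        r0 * ((m : ℝ) ^ n + (j : ℝ) ^ n - 1) / ((m : ℝ) ^ n * (j : ℝ) ^ n) ≤ r0) ∧
    Tendsto (fun n : ℕ =>
        r0 * ((m : ℝ) ^ n + (j : ℝ) ^ n - 1) / ((m : ℝ) ^ n * (j : ℝ) ^ n))
      atTop (nhds 0) := by
  have hj1 : (1 : ℝ) < j := by exact_mod_cast hj
  have hm1 : (1 : ℝ) < m := by exact_mod_cast hm
  refine ⟨fun r n => iterate_commutator_eq (by positivity) (by positivity) r0 r n,
    fun n => mul_add_sub_one_div_mul_mem_Ioc hr0 (one_le_pow₀ hm1.le) (one_le_pow₀ hj1.le),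
    tendsto_mul_pow_add_pow_sub_one_div r0 hm1 hj1⟩
end

section
/- Let f, g be polynomials of degree ≥ 2 with G = ⟨f, g⟩, and let E = E(G) be the smallest closed set with ≥ 3 points completely invariant under both f and g. If E has nonempty interior, then E = ℂ̄. -/
open Filter Set Topology

noncomputable section

noncomputable instance : UniformSpace (OnePoint ℂ) := uniformSpaceOfCompactR1

/-- Extension of a polynomial to the Riemann sphere, fixing `∞`. -/
def polyMap (p : Polynomial ℂ) : Function.End (OnePoint ℂ) :=
  OnePoint.map (fun z => p.eval z)

/-- A set is completely invariant under `f`. -/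
def CInv (f : Function.End (OnePoint ℂ)) (S : Set (OnePoint ℂ)) : Prop :=
  f '' S ⊆ S ∧ f ⁻¹' S ⊆ S

/-- The smallest closed set with at least three points that is completely invariant
under every member of `fs`. -/
def EG (fs : Set (Function.End (OnePoint ℂ))) : Set (OnePoint ℂ) :=
  ⋂₀ {S : Set (OnePoint ℂ) | IsClosed S ∧ 3 ≤ S.encard ∧ ∀ f ∈ fs, CInv f S}

/-- The set of normality (Fatou set) of a family of self-maps of the sphere:
points having a neighborhood on which the family is normal (equicontinuous). -/
def fatouSet (H : Set (Function.End (OnePoint ℂ))) : Set (OnePoint ℂ) :=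
  {z | ∃ U ∈ nhds z, EquicontinuousOn (fun h : H => (h.1 : OnePoint ℂ → OnePoint ℂ)) U}

/-- The Julia set of a family of self-maps of the sphere. -/
def juliaSG (H : Set (Function.End (OnePoint ℂ))) : Set (OnePoint ℂ) :=
  (fatouSet H)ᶜ

/-- The semigroup (under composition) generated by a set of self-maps of the sphere. -/
def semigroupGen (fs : Set (Function.End (OnePoint ℂ))) : Set (Function.End (OnePoint ℂ)) :=
  (Subsemigroup.closure fs : Subsemigroup (Function.End (OnePoint ℂ)))

/-- The Julia set of a single map: complement of the set of normality of its iterates. -/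
def juliaSet (f : Function.End (OnePoint ℂ)) : Set (OnePoint ℂ) :=
  juliaSG (semigroupGen {f})

/-- `f` is a rational map of degree at least two on the Riemann sphere. -/
def IsRatMapD2 (f : Function.End (OnePoint ℂ)) : Prop :=
  Continuous f ∧ ∃ p q : Polynomial ℂ, IsCoprime p q ∧ 2 ≤ max p.natDegree q.natDegree ∧
    ∀ z : ℂ, q.eval z ≠ 0 → f (z : OnePoint ℂ) = ((p.eval z / q.eval z : ℂ) : OnePoint ℂ)

/-!
The frontier of `E = E(G)` is again closed and completely invariant, because polynomials act on
the sphere as continuous open maps. If it had at least three points, minimality would give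
`E ⊆ ∂E`, which is impossible when `E` has interior. So `∂E` is finite, its complement on the
sphere is connected, and this complement is split by the disjoint open sets `int E` and `Eᶜ`;
since `int E ≠ ∅`, the set `Eᶜ` is empty.
-/

open OnePoint

namespace OnePoint

theorem coe_preimage_map_image {X Y : Type*} (f : X → Y) (U : Set (OnePoint X)) :
    ((↑) : Y → OnePoint Y) ⁻¹' (OnePoint.map f '' U) = f '' ((↑) ⁻¹' U) := by
  ext y
  constructor
  · rintro ⟨x, hxU, hx⟩
    induction x using OnePoint.rec with
    | infty => exact absurd hx (coe_ne_infty y).symm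
    | coe x => exact ⟨x, hxU, coe_injective hx⟩
  · rintro ⟨x, hxU, rfl⟩
    exact ⟨x, hxU, rfl⟩

theorem isOpenMap_map {X Y : Type*} [TopologicalSpace X] [TopologicalSpace Y] {f : X → Y}
    (hc : Continuous f) (ho : IsOpenMap f) (hs : Function.Surjective f) :
    IsOpenMap (OnePoint.map f) := by
  intro U hU
  by_cases hinf : ∞ ∈ U
  · obtain ⟨hK, hV⟩ := (isOpen_iff_of_mem' hinf).mp hU
    have hinf' : ∞ ∈ OnePoint.map f '' U := ⟨∞, hinf, rfl⟩
    rw [isOpen_iff_of_mem' hinf', coe_preimage_map_image]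
    -- surjectivity puts the complement of `f '' V` inside the compact set `f '' Vᶜ`
    have hsub : (f '' ((↑) ⁻¹' U))ᶜ ⊆ f '' ((↑) ⁻¹' U)ᶜ := by
      intro y hy
      obtain ⟨x, rfl⟩ := hs y
      exact ⟨x, fun hx => hy ⟨x, hx, rfl⟩, rfl⟩
    exact ⟨(hK.image hc).of_isClosed_subset (ho _ hV).isClosed_compl hsub, ho _ hV⟩
  · have hinf' : ∞ ∉ OnePoint.map f '' U := by
      rintro ⟨x, hxU, hx⟩
      induction x using OnePoint.rec with
      | infty => exact hinf hxU
      | coe x => exact coe_ne_infty _ hx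
    rw [isOpen_iff_of_notMem hinf', coe_preimage_map_image]
    exact ho _ ((isOpen_iff_of_notMem hinf).mp hU)

end OnePoint

theorem IsPreconnected.closure_eq_univ_of_compl_frontier {X : Type*} [TopologicalSpace X]
    {s : Set X} (h : IsPreconnected (frontier s)ᶜ) (hs : (interior s).Nonempty) :
    closure s = univ := by
  have hcover : (frontier s)ᶜ ⊆ interior s ∪ (closure s)ᶜ := by
    intro x hx
    by_cases hxs : x ∈ closure s
    · exact .inl (by_contra fun hxi => hx ⟨hxs, hxi⟩)
    · exact .inr hxs
  obtain ⟨x, hx⟩ := hs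
  have hsub : (frontier s)ᶜ ⊆ interior s :=
    h.subset_left_of_subset_union isOpen_interior isClosed_closure.isOpen_compl
      (disjoint_compl_right.mono_left interior_subset_closure) hcover
      ⟨x, disjoint_left.mp disjoint_interior_frontier hx, hx⟩
  refine eq_univ_of_forall fun y => by_contra fun hy => ?_
  exact hy (interior_subset_closure (hsub fun hyf => hy (frontier_subset_closure hyf)))

theorem Set.Countable.isPreconnected_compl_onePoint {B : Set (OnePoint ℂ)} (hB : B.Countable) :
    IsPreconnected Bᶜ := by
  set A : Set ℂ := ((↑) ⁻¹' B)ᶜ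
  have hA : IsPathConnected A :=
    (hB.preimage coe_injective).isPathConnected_compl_of_one_lt_rank
      (by rw [Complex.rank_real_complex]; norm_num)
  have hdense : Dense (((↑) : ℂ → OnePoint ℂ) '' A) :=
    denseRange_coe.dense_image continuous_coe ((hB.preimage coe_injective).dense_compl ℝ)
  exact (hA.isConnected.isPreconnected.image _ continuous_coe.continuousOn).subset_closure
    (image_subset_iff.mpr subset_rfl) (hdense.closure_eq ▸ subset_univ _)

theorem continuous_polyMap {p : Polynomial ℂ} (hp : p.natDegree ≠ 0) :
    Continuous (polyMap p) := by
  refine continuous_map p.continuous ?_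
  rw [coclosedCompact_eq_cocompact]
  exact (isProperMap_iff_tendsto_cocompact.mp
    (p.isProperMap_eval (Polynomial.natDegree_pos_iff_degree_pos.mp (Nat.pos_of_ne_zero hp)))).2

theorem isOpenMap_polyMap {p : Polynomial ℂ} (hp : p.natDegree ≠ 0) :
    IsOpenMap (polyMap p) :=
  have h := p.isOpenQuotientMap_eval hp
  isOpenMap_map h.continuous h.isOpenMap h.surjective

namespace CInv

variable {f : Function.End (OnePoint ℂ)} {S T : Set (OnePoint ℂ)}

theorem compl (hS : CInv f S) : CInv f Sᶜ :=
  ⟨by rintro _ ⟨x, hx, rfl⟩ hfx; exact hx (hS.2 hfx),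
    fun x hx hxS => hx (hS.1 ⟨x, hxS, rfl⟩)⟩

theorem inter (hS : CInv f S) (hT : CInv f T) : CInv f (S ∩ T) :=
  ⟨(image_inter_subset _ _ _).trans (inter_subset_inter hS.1 hT.1),
    inter_subset_inter hS.2 hT.2⟩

theorem sInter {𝒮 : Set (Set (OnePoint ℂ))} (h : ∀ S ∈ 𝒮, CInv f S) : CInv f (⋂₀ 𝒮) :=
  ⟨by rintro _ ⟨x, hx, rfl⟩ S hS; exact (h S hS).1 ⟨x, hx S hS, rfl⟩,
    fun _ hx S hS => (h S hS).2 (hx S hS)⟩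

theorem closure (hc : Continuous f) (ho : IsOpenMap f) (hS : CInv f S) :
    CInv f (closure S) :=
  ⟨(image_closure_subset_closure_image hc).trans (closure_mono hS.1),
    ho.preimage_closure_subset_closure_preimage.trans (closure_mono hS.2)⟩

theorem frontier (hc : Continuous f) (ho : IsOpenMap f) (hS : CInv f S) :
    CInv f (frontier S) := by
  rw [frontier_eq_closure_inter_closure]
  exact (hS.closure hc ho).inter (hS.compl.closure hc ho)

end CInv

section EG

variable {fs : Set (Function.End (OnePoint ℂ))}

theorem isClosed_EG : IsClosed (EG fs) :=
  isClosed_sInter fun _ hS => hS.1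

theorem cInv_EG {f : Function.End (OnePoint ℂ)} (hf : f ∈ fs) : CInv f (EG fs) :=
  CInv.sInter fun _ hS => hS.2.2 f hf

theorem EG_subset {S : Set (OnePoint ℂ)} (hS : IsClosed S) (h3 : 3 ≤ S.encard)
    (hinv : ∀ f ∈ fs, CInv f S) : EG fs ⊆ S :=
  sInter_subset_of_mem ⟨hS, h3, hinv⟩

theorem encard_frontier_EG_lt (hmaps : ∀ f ∈ fs, Continuous f ∧ IsOpenMap f)
    (hint : (interior (EG fs)).Nonempty) : (frontier (EG fs)).encard < 3 := by
  by_contra! h3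
  have hsub : EG fs ⊆ frontier (EG fs) :=
    EG_subset isClosed_frontier h3 fun f hf =>
      (cInv_EG hf).frontier (hmaps f hf).1 (hmaps f hf).2
  obtain ⟨x, hx⟩ := hint
  exact disjoint_left.mp disjoint_interior_frontier hx (hsub (interior_subset hx))

end EG

/-- If `E(G)` has nonempty interior, for `G` generated by two polynomials of degree at
least two, then `E(G)` is the whole sphere. -/
theorem stmt12 (f g : Polynomial ℂ) (hf : 2 ≤ f.natDegree) (hg : 2 ≤ g.natDegree)
    (hint : (interior (EG {polyMap f, polyMap g})).Nonempty) :
    EG {polyMap f, polyMap g} = Set.univ := by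
  have hmaps : ∀ h ∈ ({polyMap f, polyMap g} : Set (Function.End (OnePoint ℂ))),
      Continuous h ∧ IsOpenMap h := by
    rintro h (rfl | rfl) <;> exact ⟨continuous_polyMap (by omega), isOpenMap_polyMap (by omega)⟩
  have hfin : (frontier (EG {polyMap f, polyMap g})).Finite :=
    finite_of_encard_le_coe (encard_frontier_EG_lt hmaps hint).le
  rw [← isClosed_EG.closure_eq]
  exact IsPreconnected.closure_eq_univ_of_compl_frontier
    hfin.countable.isPreconnected_compl_onePoint hint

end
end
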